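/- Let A be an irreducible N×N max-plus matrix and write G = G(A). Define B_ms(G) = 2·cd(G) + ep(G) + max_{H a critical component of G} c(H) + max_{H a critical component of G} ep(H) − 1, and μ(A) = sup{ A^{⊗n}_{i,k} − A^{⊗n}_{i,j} : i, j, k nodes of G, n ≥ B_ms(G), A^{⊗n}_{i,j} ≠ −∞ }. Then μ(A) is finite, and, defining for each j ∈ {1,…,N} the vector v^j ∈ ℝ^N by v^j_j = 0 and v^j_k = −μ(A) for k ≠ j, the matrix transient satisfies n_A ≤ max{ B_ms(G), n_{A,v^1}, …, n_{A,v^N} }. -/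

import Mathlib

/-!
For `n ≥ cd(G) + ep(G)`, whether a walk of length `n` joins `i` to `j` depends only on `n`
modulo the cyclicity of `G`: reach `j` by a simple walk and pad with a closed walk at `j`.
Rerouting the last `cd(G) + ep(G)` steps of an optimal walk therefore bounds every difference
`A^{⊗n}_{i,k} − A^{⊗n}_{i,j}`, so `μ(A)` is finite. From `B_ms(G) − 1` on, `μ(A)` is large
enough that every finite entry `A^{⊗n}_{i,j}` is the `i`-th coordinate of `A^{⊗n} ⊗ v^j`;
the periodicity of these `N` systems and of the pattern of `−∞` entries then gives the
periodicity of `A^{⊗n}`.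
-/

namespace Transients

variable {V : Type*}

/-- A walk of length `n` in the graph with edge relation `E`, given by its node
sequence `p 0, p 1, …, p n`. -/
def IsWalk (E : V → V → Prop) (n : ℕ) (p : ℕ → V) : Prop :=
  ∀ k, k < n → E (p k) (p (k + 1))

/-- A closed walk: start node equals end node. -/
def IsClosedWalk (E : V → V → Prop) (n : ℕ) (p : ℕ → V) : Prop :=
  IsWalk E n p ∧ p 0 = p n

/-- A nonempty elementary closed walk: closed, and no node repeats except start = end. -/
def IsElemClosedWalk (E : V → V → Prop) (n : ℕ) (p : ℕ → V) : Prop :=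
  0 < n ∧ IsClosedWalk E n p ∧ ∀ k l, k < n → l < n → p k = p l → k = l

/-- A simple walk: no node is visited twice. -/
def IsSimpleWalk (E : V → V → Prop) (n : ℕ) (p : ℕ → V) : Prop :=
  IsWalk E n p ∧ ∀ k l, k ≤ n → l ≤ n → p k = p l → k = l

def StronglyConnected (E : V → V → Prop) : Prop :=
  ∀ i j : V, ∃ n p, IsWalk E n p ∧ p 0 = i ∧ p n = j

def NontrivialGraph (E : V → V → Prop) : Prop := ∃ i j, E i j

/-- The weight `w_*` of a walk in an edge-weighted graph. -/
noncomputable def walkWeight (w : V → V → ℝ) (n : ℕ) (p : ℕ → V) : ℝ :=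
  ∑ k ∈ Finset.range n, w (p k) (p (k + 1))

/-- The rate ρ(G): supremum of `w_*(γ)/ℓ(γ)` over nonempty closed walks γ. -/
noncomputable def rate (E : V → V → Prop) (w : V → V → ℝ) : ℝ :=
  sSup {x : ℝ | ∃ n p, 0 < n ∧ IsClosedWalk E n p ∧ x = walkWeight w n p / n}

/-- A critical closed walk: nonempty, closed, and its weight is ρ(G) times its length. -/
def IsCriticalWalk (E : V → V → Prop) (w : V → V → ℝ) (n : ℕ) (p : ℕ → V) : Prop :=
  0 < n ∧ IsClosedWalk E n p ∧ walkWeight w n p = rate E w * n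

/-- A critical node: lies on some critical closed walk. -/
def CriticalNode (E : V → V → Prop) (w : V → V → ℝ) (i : V) : Prop :=
  ∃ n p k, IsCriticalWalk E w n p ∧ k ≤ n ∧ p k = i

/-- A critical edge: lies on some critical closed walk. -/
def CriticalEdge (E : V → V → Prop) (w : V → V → ℝ) (i j : V) : Prop :=
  ∃ n p k, IsCriticalWalk E w n p ∧ k < n ∧ p k = i ∧ p (k + 1) = j

/-- The non-critical rate ρ_nc(G): supremum of mean weights of nonempty closed walks
containing no critical node. -/
noncomputable def ncRate (E : V → V → Prop) (w : V → V → ℝ) : ℝ :=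
  sSup {x : ℝ | ∃ n p, 0 < n ∧ IsClosedWalk E n p ∧
    (∀ k, k ≤ n → ¬ CriticalNode E w (p k)) ∧ x = walkWeight w n p / n}

/-- Δ(G), the maximum edge weight. -/
noncomputable def maxWeight (E : V → V → Prop) (w : V → V → ℝ) : ℝ :=
  sSup {x : ℝ | ∃ i j, E i j ∧ x = w i j}

/-- δ(G), the minimum edge weight. -/
noncomputable def minWeight (E : V → V → Prop) (w : V → V → ℝ) : ℝ :=
  sInf {x : ℝ | ∃ i j, E i j ∧ x = w i j}

open Classical in
/-- Δ_nc(G), the maximum weight of an edge joining two non-critical nodes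
(ρ(G) if there is no such edge). -/
noncomputable def maxNcWeight (E : V → V → Prop) (w : V → V → ℝ) : ℝ :=
  if (∃ i j, E i j ∧ ¬ CriticalNode E w i ∧ ¬ CriticalNode E w j) then
    sSup {x : ℝ | ∃ i j, E i j ∧ ¬ CriticalNode E w i ∧ ¬ CriticalNode E w j ∧ x = w i j}
  else rate E w

/-- `d` is the greatest common divisor of the set `S` of naturals. -/
def IsGcdOf (d : ℕ) (S : Set ℕ) : Prop :=
  (∀ s ∈ S, d ∣ s) ∧ ∀ e : ℕ, (∀ s ∈ S, e ∣ s) → e ∣ d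

/-- The set of lengths of nonempty closed walks in the graph. -/
def ClosedLengths (E : V → V → Prop) : Set ℕ :=
  {n | 0 < n ∧ ∃ p, IsClosedWalk E n p}

/-- The set of lengths of nonempty closed walks starting at `i`. -/
def ClosedLengthsAt (E : V → V → Prop) (i : V) : Set ℕ :=
  {n | 0 < n ∧ ∃ p, IsWalk E n p ∧ p 0 = i ∧ p n = i}

/-- There is a (possibly empty) closed walk of length `n` starting at `i`. -/
def HasClosedWalkAt (E : V → V → Prop) (i : V) (n : ℕ) : Prop :=
  ∃ p, IsWalk E n p ∧ p 0 = i ∧ p n = i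

/-- cd(G), the cab driver's diameter: the maximum length of simple walks. -/
noncomputable def cabDiameter (E : V → V → Prop) : ℕ :=
  sSup {n | ∃ p, IsSimpleWalk E n p}

/-- cr(G), the circumference: the maximum length of nonempty elementary closed walks. -/
noncomputable def circumference (E : V → V → Prop) : ℕ :=
  sSup {n | ∃ p, IsElemClosedWalk E n p}

/-- `g` is the girth of the graph: the minimum length of nonempty elementary closed walks. -/
def IsGirth (E : V → V → Prop) (g : ℕ) : Prop :=
  IsLeast {n | ∃ p, IsElemClosedWalk E n p} g

/-- `ep` is the exploration penalty of a graph of cyclicity `c`: the least `m` such that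
for every node `i` and every multiple `n` of `c` with `n ≥ m` there is a closed walk
of length `n` starting at `i`. -/
def IsEp (E : V → V → Prop) (c ep : ℕ) : Prop :=
  IsLeast {m | ∀ i : V, ∀ n : ℕ, c ∣ n → m ≤ n → HasClosedWalkAt E i n} ep

/-- `i` and `j` lie in the same strongly connected component of the graph. -/
def SameComp (E : V → V → Prop) (i j : V) : Prop :=
  (∃ n p, IsWalk E n p ∧ p 0 = i ∧ p n = j) ∧ (∃ n p, IsWalk E n p ∧ p 0 = j ∧ p n = i)

/-- `m` is the exploration penalty of the strongly connected component of `k`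
(a component of cyclicity `c`). -/
def IsCompEp (E : V → V → Prop) (k : V) (c m : ℕ) : Prop :=
  IsLeast {m' | ∀ i : V, SameComp E k i → ∀ n : ℕ, c ∣ n → m' ≤ n → HasClosedWalkAt E i n} m

/-- Max-plus matrix product. -/
noncomputable def mpMul {N : ℕ} (A B : Matrix (Fin N) (Fin N) (WithBot ℝ)) :
    Matrix (Fin N) (Fin N) (WithBot ℝ) :=
  fun i j => Finset.univ.sup fun k => A i k + B k j

/-- Max-plus matrix power, `A^{⊗n}`. -/
noncomputable def mpPow {N : ℕ} (A : Matrix (Fin N) (Fin N) (WithBot ℝ)) :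
    ℕ → Matrix (Fin N) (Fin N) (WithBot ℝ)
  | 0 => fun i j => if i = j then (0 : WithBot ℝ) else ⊥
  | n + 1 => mpMul A (mpPow A n)

/-- Max-plus matrix-vector product. -/
noncomputable def mpVec {N : ℕ} (A : Matrix (Fin N) (Fin N) (WithBot ℝ))
    (v : Fin N → WithBot ℝ) : Fin N → WithBot ℝ :=
  fun i => Finset.univ.sup fun j => A i j + v j

/-- The edge relation of the weighted graph `G(A)`. -/
def mEdge {N : ℕ} (A : Matrix (Fin N) (Fin N) (WithBot ℝ)) : Fin N → Fin N → Prop :=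
  fun i j => A i j ≠ ⊥

/-- The edge weights of the weighted graph `G(A)`. -/
noncomputable def mWeight {N : ℕ} (A : Matrix (Fin N) (Fin N) (WithBot ℝ)) :
    Fin N → Fin N → ℝ :=
  fun i j => WithBot.unbotD 0 (A i j)

/-- `A` is irreducible: `G(A)` is strongly connected and has at least one edge. -/
def MPIrreducible {N : ℕ} (A : Matrix (Fin N) (Fin N) (WithBot ℝ)) : Prop :=
  StronglyConnected (mEdge A) ∧ NontrivialGraph (mEdge A)

/-- The linear max-plus system `x(n) = A^{⊗n} ⊗ v`. -/
noncomputable def mpSystem {N : ℕ} (A : Matrix (Fin N) (Fin N) (WithBot ℝ)) (v : Fin N → ℝ)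
    (n : ℕ) : Fin N → WithBot ℝ :=
  mpVec (mpPow A n) fun j => (v j : WithBot ℝ)

/-- The set of indices from which the system `x_{A,v}` is periodic with increment
`p·ρ(A)`; its least element is the transient `n_{A,v}`. -/
noncomputable def SysTransientSet {N : ℕ} (A : Matrix (Fin N) (Fin N) (WithBot ℝ))
    (v : Fin N → ℝ) : Set ℕ :=
  {n₀ | ∃ p : ℕ, 0 < p ∧ ∀ n, n₀ ≤ n → ∀ i,
    mpSystem A v (n + p) i
      = mpSystem A v n i + ((p * rate (mEdge A) (mWeight A) : ℝ) : WithBot ℝ)}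

/-- The set of indices from which the powers of `A` are periodic with increment
`p·ρ(A)`; its least element is the transient `n_A`. -/
noncomputable def MatTransientSet {N : ℕ} (A : Matrix (Fin N) (Fin N) (WithBot ℝ)) : Set ℕ :=
  {n₀ | ∃ p : ℕ, 0 < p ∧ ∀ n, n₀ ≤ n → ∀ i j,
    mpPow A (n + p) i j
      = mpPow A n i j + ((p * rate (mEdge A) (mWeight A) : ℝ) : WithBot ℝ)}

/-- `‖v‖ = max_i v_i − min_i v_i`. -/
noncomputable def vnorm {N : ℕ} (v : Fin N → ℝ) : ℝ :=
  sSup (Set.range v) - sInf (Set.range v)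


/-- The set of real differences `A^{⊗n}_{i,k} − A^{⊗n}_{i,j}` over all nodes `i,j,k`
and all `n ≥ B − 1` (stated as `B ≤ n + 1`) with `A^{⊗n}_{i,j} ≠ −∞` (the entries
with `A^{⊗n}_{i,k} = −∞` contribute `−∞` and are irrelevant for the supremum);
`μ(A)` is its supremum. -/
def muSet {N : ℕ} (A : Matrix (Fin N) (Fin N) (WithBot ℝ)) (B : ℕ) : Set ℝ :=
  {x : ℝ | ∃ (i j k : Fin N) (n : ℕ), B ≤ n + 1 ∧ ∃ a b : ℝ,
    mpPow A n i k = (a : WithBot ℝ) ∧ mpPow A n i j = (b : WithBot ℝ) ∧ x = a - b}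

section Walks

variable {E : V → V → Prop} {w : V → V → ℝ} {m n : ℕ} {p q : ℕ → V}

def HasWalk (E : V → V → Prop) (n : ℕ) (i j : V) : Prop :=
  ∃ p, IsWalk E n p ∧ p 0 = i ∧ p n = j

def walkAppend (m : ℕ) (p q : ℕ → V) : ℕ → V := fun t => if t < m then p t else q (t - m)

lemma walkAppend_of_lt {t : ℕ} (ht : t < m) : walkAppend m p q t = p t := if_pos ht

lemma walkAppend_of_le {t : ℕ} (ht : m ≤ t) : walkAppend m p q t = q (t - m) :=
  if_neg (Nat.not_lt.2 ht)

lemma walkAppend_of_le_of_eq {t : ℕ} (h : p m = q 0) (ht : t ≤ m) :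
    walkAppend m p q t = p t := by
  rcases ht.lt_or_eq with ht | rfl
  · exact walkAppend_of_lt ht
  · rw [walkAppend_of_le le_rfl, Nat.sub_self, h]

lemma walkAppend_zero (h : p m = q 0) : walkAppend m p q 0 = p 0 :=
  walkAppend_of_le_of_eq h m.zero_le

lemma walkAppend_add (m n : ℕ) (p q : ℕ → V) : walkAppend m p q (m + n) = q n := by
  rw [walkAppend_of_le (Nat.le_add_right m n), Nat.add_sub_cancel_left]

lemma IsWalk.append (hp : IsWalk E m p) (hq : IsWalk E n q) (h : p m = q 0) :
    IsWalk E (m + n) (walkAppend m p q) := by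
  intro t ht
  by_cases htm : t < m
  · rw [walkAppend_of_lt htm, walkAppend_of_le_of_eq h htm]
    exact hp t htm
  · rw [walkAppend_of_le (by omega), walkAppend_of_le (by omega), Nat.sub_add_comm (by omega)]
    exact hq (t - m) (by omega)

lemma IsWalk.take (hp : IsWalk E n p) (hmn : m ≤ n) : IsWalk E m p :=
  fun t ht => hp t (by omega)

lemma IsWalk.drop (hp : IsWalk E n p) (m : ℕ) : IsWalk E (n - m) (fun t => p (m + t)) :=
  fun t ht => hp (m + t) (by omega)

lemma walkWeight_add (m n : ℕ) (p : ℕ → V) :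
    walkWeight w (m + n) p = walkWeight w m p + walkWeight w n (fun t => p (m + t)) := by
  simp only [walkWeight, Finset.sum_range_add, add_assoc]

lemma walkWeight_append (h : p m = q 0) :
    walkWeight w (m + n) (walkAppend m p q) = walkWeight w m p + walkWeight w n q := by
  rw [walkWeight_add]
  congr 1
  · refine Finset.sum_congr rfl fun t ht => ?_
    rw [Finset.mem_range] at ht
    rw [walkAppend_of_lt ht, walkAppend_of_le_of_eq h ht]
  · simp only [walkWeight, walkAppend_add]

lemma abs_walkWeight_le {W : ℝ} (hW : ∀ i j, |w i j| ≤ W) (n : ℕ) (p : ℕ → V) :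
    |walkWeight w n p| ≤ n * W :=
  calc |walkWeight w n p| ≤ ∑ k ∈ Finset.range n, |w (p k) (p (k + 1))| :=
        Finset.abs_sum_le_sum_abs _ _
    _ ≤ ∑ _k ∈ Finset.range n, W := Finset.sum_le_sum fun _ _ => hW _ _
    _ = n * W := by simp

lemma HasWalk.append {i j k : V} (h₁ : HasWalk E m i j) (h₂ : HasWalk E n j k) :
    HasWalk E (m + n) i k := by
  obtain ⟨p, hp, rfl, rfl⟩ := h₁
  obtain ⟨q, hq, hq0, rfl⟩ := h₂
  exact ⟨_, hp.append hq hq0.symm, walkAppend_zero hq0.symm, walkAppend_add m n p q⟩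

lemma IsClosedWalk.hasWalk {t : ℕ} (hp : IsClosedWalk E n p) (ht : t ≤ n) :
    HasWalk E n (p t) (p t) := by
  have hsuffix : HasWalk E (n - t) (p t) (p 0) :=
    ⟨_, hp.1.drop t, rfl, by rw [Nat.add_sub_cancel' ht, hp.2]⟩
  simpa [Nat.sub_add_cancel ht] using hsuffix.append ⟨p, hp.1.take ht, rfl, rfl⟩

lemma HasWalk.exists_isSimpleWalk {i j : V} (h : HasWalk E n i j) :
    ∃ ℓ p, IsSimpleWalk E ℓ p ∧ p 0 = i ∧ p ℓ = j := by
  induction n using Nat.strong_induction_on generalizing i with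
  | _ n ih =>
    obtain ⟨p, hp, rfl, rfl⟩ := h
    by_cases hrep : ∃ k l, k < l ∧ l ≤ n ∧ p k = p l
    · obtain ⟨k, l, hkl, hln, hpkl⟩ := hrep
      have hprefix : HasWalk E k (p 0) (p k) := ⟨p, hp.take (by omega), rfl, rfl⟩
      have hsuffix : HasWalk E (n - l) (p k) (p n) :=
        ⟨_, hp.drop l, by simp [hpkl], by simp [Nat.add_sub_cancel' hln]⟩
      exact ih _ (by omega) (hprefix.append hsuffix)
    · push Not at hrep
      refine ⟨n, p, ⟨hp, fun k l hk hl hpkl => ?_⟩, rfl, rfl⟩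
      rcases lt_trichotomy k l with hkl | hkl | hkl
      · exact absurd hpkl (hrep k l hkl hl)
      · exact hkl
      · exact absurd hpkl.symm (hrep l k hkl hk)

lemma IsSimpleWalk.le_cabDiameter [Fintype V] (hp : IsSimpleWalk E n p) :
    n ≤ cabDiameter E := by
  refine le_csSup ⟨Fintype.card V, fun ℓ ⟨q, hq⟩ => ?_⟩ ⟨p, hp⟩
  have hinj : Function.Injective (fun t : Fin (ℓ + 1) => q t) :=
    fun a b hab => Fin.ext (hq.2 a b (by omega) (by omega) hab)
  have := Fintype.card_le_of_injective _ hinj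
  simp only [Fintype.card_fin] at this
  omega

lemma HasWalk.dvd_of_closed {c : ℕ} (hc : ∀ n ∈ ClosedLengths E, c ∣ n) {i : V}
    (h : HasWalk E n i i) : c ∣ n := by
  rcases Nat.eq_zero_or_pos n with rfl | hn
  · exact dvd_zero c
  · obtain ⟨p, hp, hp0, hpn⟩ := h
    exact hc n ⟨hn, p, hp, hp0.trans hpn.symm⟩

lemma HasWalk.modEq {c m' : ℕ} (hE : StronglyConnected E)
    (hc : ∀ n ∈ ClosedLengths E, c ∣ n) {i j : V} (h : HasWalk E m i j)
    (h' : HasWalk E m' i j) : m ≡ m' [MOD c] := by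
  obtain ⟨r, hback⟩ := hE j i
  exact Nat.ModEq.add_right_cancel' r
    ((Nat.modEq_zero_iff_dvd.2 ((h.append hback).dvd_of_closed hc)).trans
      (Nat.modEq_zero_iff_dvd.2 ((h'.append hback).dvd_of_closed hc)).symm)

lemma HasWalk.of_modEq [Fintype V] {c ep L : ℕ} (hE : StronglyConnected E)
    (hc : ∀ n ∈ ClosedLengths E, c ∣ n) (hep : IsEp E c ep) {i j : V} (h : HasWalk E m i j)
    (hmL : m ≡ L [MOD c]) (hL : cabDiameter E + ep ≤ L) : HasWalk E L i j := by
  obtain ⟨ℓ, p, hp, hp0, hpℓ⟩ := h.exists_isSimpleWalk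
  have hℓ : ℓ ≤ cabDiameter E := hp.le_cabDiameter
  have hsimple : HasWalk E ℓ i j := ⟨p, hp.1, hp0, hpℓ⟩
  have hdvd : c ∣ L - ℓ :=
    (Nat.modEq_iff_dvd' (by omega)).1 ((hsimple.modEq hE hc h).trans hmL)
  simpa [Nat.add_sub_cancel' (show ℓ ≤ L by omega)] using
    hsimple.append (hep.1 j (L - ℓ) hdvd (by omega))

lemma CriticalNode.exists_closedLength {k : V} (hk : CriticalNode E w k) :
    ∃ q, q ∈ ClosedLengths E ∧ q ∈ ClosedLengthsAt (CriticalEdge E w) k := by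
  obtain ⟨n, p, t, hcrit, ht, rfl⟩ := hk
  have hcritWalk : IsClosedWalk (CriticalEdge E w) n p :=
    ⟨fun s hs => ⟨n, p, s, hcrit, hs, rfl, rfl⟩, hcrit.2.1.2⟩
  exact ⟨n, ⟨hcrit.1, p, hcrit.2.1⟩, hcrit.1, hcritWalk.hasWalk ht⟩

end Walks

section MaxPlus

variable {N : ℕ} {A : Matrix (Fin N) (Fin N) (WithBot ℝ)}

lemma mpPow_zero_apply (i j : Fin N) : mpPow A 0 i j = if i = j then 0 else ⊥ := rfl

lemma mpPow_succ_apply (n : ℕ) (i j : Fin N) :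
    mpPow A (n + 1) i j = Finset.univ.sup fun k => A i k + mpPow A n k j := rfl

lemma coe_mWeight {i j : Fin N} {a : ℝ} (h : A i j = a) : mWeight A i j = a := by
  simp [mWeight, h]

lemma IsWalk.walkWeight_le_mpPow {n : ℕ} {p : ℕ → Fin N} (hp : IsWalk (mEdge A) n p) :
    (walkWeight (mWeight A) n p : WithBot ℝ) ≤ mpPow A n (p 0) (p n) := by
  induction n generalizing p with
  | zero => simp [walkWeight, mpPow_zero_apply]
  | succ n ih =>
    obtain ⟨a, ha⟩ := WithBot.ne_bot_iff_exists.1 (hp 0 n.succ_pos : A (p 0) (p 1) ≠ ⊥)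
    have htail := ih (p := fun t => p (t + 1)) fun t ht => hp (t + 1) (by omega)
    have hsplit : walkWeight (mWeight A) (n + 1) p
        = mWeight A (p 0) (p 1) + walkWeight (mWeight A) n (fun t => p (t + 1)) := by
      rw [walkWeight, Finset.sum_range_succ', add_comm]; rfl
    rw [hsplit, WithBot.coe_add, coe_mWeight ha.symm, ha, mpPow_succ_apply]
    calc _ ≤ A (p 0) (p 1) + mpPow A n (p 1) (p (n + 1)) := add_le_add_right htail _
      _ ≤ _ := Finset.le_sup (f := fun k => A (p 0) k + mpPow A n k (p (n + 1)))
          (Finset.mem_univ _)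

lemma exists_walk_of_mpPow_eq {n : ℕ} {i j : Fin N} {b : ℝ} (h : mpPow A n i j = b) :
    ∃ p, IsWalk (mEdge A) n p ∧ p 0 = i ∧ p n = j ∧ walkWeight (mWeight A) n p = b := by
  induction n generalizing i b with
  | zero =>
    rw [mpPow_zero_apply] at h
    split_ifs at h with hij
    · exact ⟨fun _ => i, fun _ h => absurd h (Nat.not_lt_zero _), rfl, hij,
        by simp only [walkWeight, Finset.range_zero, Finset.sum_empty]; exact_mod_cast h⟩
    · exact absurd h WithBot.bot_ne_coe
  | succ n ih =>
    obtain ⟨k, -, hk⟩ := Finset.exists_mem_eq_sup Finset.univ ⟨i, Finset.mem_univ i⟩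
      (fun k => A i k + mpPow A n k j)
    rw [mpPow_succ_apply, hk] at h
    obtain ⟨a, c, ha, hc, rfl⟩ := WithBot.add_eq_coe.1 h
    obtain ⟨p, hp, hp0, hpn, hpw⟩ := ih hc.symm
    let e : ℕ → Fin N := fun t => if t = 0 then i else k
    have he : IsWalk (mEdge A) 1 e := fun t ht => by
      simp [e, Nat.lt_one_iff.1 ht, mEdge, ← ha]
    have hjoin : e 1 = p 0 := by simp [e, hp0]
    refine ⟨walkAppend 1 e p, by simpa [add_comm] using he.append hp hjoin,
      walkAppend_zero hjoin, by rw [add_comm]; exact (walkAppend_add 1 n e p).trans hpn, ?_⟩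
    rw [add_comm n 1, walkWeight_append hjoin, hpw]
    simp [walkWeight, e, coe_mWeight ha.symm]

lemma mpPow_ne_bot_iff {n : ℕ} {i j : Fin N} :
    mpPow A n i j ≠ ⊥ ↔ HasWalk (mEdge A) n i j := by
  constructor
  · intro h
    obtain ⟨b, hb⟩ := WithBot.ne_bot_iff_exists.1 h
    obtain ⟨p, hp, hp0, hpn, -⟩ := exists_walk_of_mpPow_eq hb.symm
    exact ⟨p, hp, hp0, hpn⟩
  · rintro ⟨p, hp, rfl, rfl⟩ hbot
    simpa [hbot] using hp.walkWeight_le_mpPow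

lemma exists_abs_mWeight_le (A : Matrix (Fin N) (Fin N) (WithBot ℝ)) :
    ∃ W, 0 ≤ W ∧ ∀ i j, |mWeight A i j| ≤ W :=
  ⟨∑ i, ∑ j, |mWeight A i j|, by positivity, fun i j =>
    (Finset.single_le_sum (f := fun j => |mWeight A i j|) (fun _ _ => abs_nonneg _)
      (Finset.mem_univ j)).trans
    (Finset.single_le_sum (f := fun i => ∑ j, |mWeight A i j|)
      (fun _ _ => by positivity) (Finset.mem_univ i))⟩

end MaxPlus

section Transient

variable {N : ℕ} {A : Matrix (Fin N) (Fin N) (WithBot ℝ)} {c ep : ℕ}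

lemma abs_le_of_mpPow_eq {W : ℝ} (hW : ∀ i j, |mWeight A i j| ≤ W) {n : ℕ} {i j : Fin N}
    {b : ℝ} (h : mpPow A n i j = b) : |b| ≤ n * W := by
  obtain ⟨p, -, -, -, rfl⟩ := exists_walk_of_mpPow_eq h
  exact abs_walkWeight_le hW n p

lemma sub_le_of_mpPow_eq (hE : StronglyConnected (mEdge A))
    (hc : ∀ n ∈ ClosedLengths (mEdge A), c ∣ n) (hep : IsEp (mEdge A) c ep) {W : ℝ}
    (hW : ∀ i j, |mWeight A i j| ≤ W) {L n : ℕ} (hL : cabDiameter (mEdge A) + ep ≤ L)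
    (hLn : L ≤ n) {i j k : Fin N} {a b : ℝ} (ha : mpPow A n i k = a) (hb : mpPow A n i j = b) :
    a - b ≤ 2 * (L * W) := by
  obtain ⟨p, hp, rfl, -, rfl⟩ := exists_walk_of_mpPow_eq ha
  obtain ⟨m, rfl⟩ := Nat.exists_eq_add_of_le' hLn
  have hprefix : HasWalk (mEdge A) m (p 0) (p m) := ⟨p, hp.take (by omega), rfl, rfl⟩
  have hij : HasWalk (mEdge A) (m + L) (p 0) j :=
    mpPow_ne_bot_iff.1 (by rw [hb]; exact WithBot.coe_ne_bot)
  obtain ⟨r, hr⟩ : ∃ r, HasWalk (mEdge A) r (p m) j := hE (p m) j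
  have hmod : r ≡ L [MOD c] :=
    Nat.ModEq.add_left_cancel' m ((hprefix.append hr).modEq hE hc hij)
  obtain ⟨q, hq, hq0, hqL⟩ := hr.of_modEq hE hc hep hmod hL
  have hle := ((hp.take (Nat.le_add_right m L)).append hq hq0.symm).walkWeight_le_mpPow
  rw [walkAppend_zero hq0.symm, walkAppend_add, hqL, hb, walkWeight_append hq0.symm] at hle
  have hsplit := walkWeight_add (w := mWeight A) m L p
  have hsuffix := abs_le.1 (abs_walkWeight_le hW L (fun t => p (m + t)))
  have hreroute := abs_le.1 (abs_walkWeight_le hW L q)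
  have := WithBot.coe_le_coe.1 hle
  linarith

lemma bddAbove_muSet (hE : StronglyConnected (mEdge A))
    (hc : ∀ n ∈ ClosedLengths (mEdge A), c ∣ n) (hep : IsEp (mEdge A) c ep) (B : ℕ) :
    BddAbove (muSet A B) := by
  obtain ⟨W, hW0, hW⟩ := exists_abs_mWeight_le A
  refine ⟨2 * ((cabDiameter (mEdge A) + ep : ℕ) * W), ?_⟩
  rintro _ ⟨i, j, k, n, -, a, b, ha, hb, rfl⟩
  rcases le_or_gt (cabDiameter (mEdge A) + ep) n with hn | hn
  · exact sub_le_of_mpPow_eq hE hc hep hW le_rfl hn ha hb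
  · have hnW : (n : ℝ) * W ≤ (cabDiameter (mEdge A) + ep : ℕ) * W :=
      mul_le_mul_of_nonneg_right (by exact_mod_cast hn.le) hW0
    linarith [abs_le.1 (abs_le_of_mpPow_eq hW ha), abs_le.1 (abs_le_of_mpPow_eq hW hb)]

/-- The vector `v^j`. -/
noncomputable def muVec (A : Matrix (Fin N) (Fin N) (WithBot ℝ)) (B : ℕ) (j : Fin N) :
    Fin N → ℝ :=
  fun k => if k = j then 0 else - sSup (muSet A B)

lemma mpSystem_muVec_eq {B n : ℕ} (hbdd : BddAbove (muSet A B)) (hn : B ≤ n + 1) {i j : Fin N}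
    {b : ℝ} (h : mpPow A n i j = b) : mpSystem A (muVec A B j) n i = b := by
  simp only [mpSystem, mpVec]
  refine le_antisymm (Finset.sup_le fun k _ => ?_) ?_
  · by_cases hkj : k = j
    · simp [muVec, hkj, h]
    · rcases eq_or_ne (mpPow A n i k) ⊥ with hbot | hfin
      · simp [hbot]
      obtain ⟨a, ha⟩ := WithBot.ne_bot_iff_exists.1 hfin
      have hmu : a - b ≤ sSup (muSet A B) :=
        le_csSup hbdd ⟨i, j, k, n, hn, a, b, ha.symm, h, rfl⟩
      rw [← ha, muVec, if_neg hkj, ← WithBot.coe_add]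
      exact WithBot.coe_le_coe.2 (by linarith)
  · calc (b : WithBot ℝ) = mpPow A n i j + (muVec A B j j : WithBot ℝ) := by simp [muVec, h]
      _ ≤ _ := Finset.le_sup (f := fun k => mpPow A n i k + (muVec A B j k : WithBot ℝ))
          (Finset.mem_univ j)

lemma add_period_of_dvd {f : ℕ → WithBot ℝ} {n₀ t s : ℕ} {ρ : ℝ}
    (h : ∀ n, n₀ ≤ n → f (n + t) = f n + ((t * ρ : ℝ) : WithBot ℝ)) (hts : t ∣ s) :
    ∀ n, n₀ ≤ n → f (n + s) = f n + ((s * ρ : ℝ) : WithBot ℝ) := by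
  obtain ⟨k, rfl⟩ := hts
  induction k with
  | zero => simp
  | succ k ih =>
    intro n hn
    rw [Nat.mul_succ, ← add_assoc, h _ (by omega), ih n hn, add_assoc, ← WithBot.coe_add]
    congr 2
    push_cast
    ring

lemma mem_matTransientSet (hE : StronglyConnected (mEdge A))
    (hc : ∀ n ∈ ClosedLengths (mEdge A), c ∣ n) (hc0 : 0 < c) (hep : IsEp (mEdge A) c ep)
    {B T : ℕ} (hT : cabDiameter (mEdge A) + ep ≤ T) (hBT : B ≤ T + 1)
    (hbdd : BddAbove (muSet A B)) (hsys : ∀ j, T ∈ SysTransientSet A (muVec A B j)) :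
    T ∈ MatTransientSet A := by
  choose t ht hper using hsys
  refine ⟨c * ∏ j, t j, Nat.mul_pos hc0 (Finset.prod_pos fun j _ => ht j), fun n hn i j => ?_⟩
  have hmod : n ≡ n + c * ∏ j, t j [MOD c] := by simp
  have hreach : mpPow A n i j ≠ ⊥ ↔ mpPow A (n + c * ∏ j, t j) i j ≠ ⊥ := by
    simp only [mpPow_ne_bot_iff]
    exact ⟨fun h => h.of_modEq hE hc hep hmod (by omega),
      fun h => h.of_modEq hE hc hep hmod.symm (by omega)⟩
  rcases eq_or_ne (mpPow A n i j) ⊥ with hbot | hfin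
  · have hbot' : mpPow A (n + c * ∏ j, t j) i j = ⊥ := by
      by_contra h
      exact hreach.2 h hbot
    rw [hbot, hbot', WithBot.bot_add]
  · obtain ⟨b, hb⟩ := WithBot.ne_bot_iff_exists.1 hfin
    obtain ⟨b', hb'⟩ := WithBot.ne_bot_iff_exists.1 (hreach.1 hfin)
    rw [← hb, ← hb', ← mpSystem_muVec_eq hbdd (by omega) hb.symm,
      ← mpSystem_muVec_eq hbdd (by omega) hb'.symm]
    exact add_period_of_dvd (f := fun m => mpSystem A (muVec A B j) m i)
      (fun m hm => hper j m hm i) ((Finset.dvd_prod_of_mem t (Finset.mem_univ j)).mul_left c) n hn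

end Transient

theorem stmt_18_general {N : ℕ} (A : Matrix (Fin N) (Fin N) (WithBot ℝ)) (hA : MPIrreducible A)
    (cG epG : ℕ) (hcG : IsGcdOf cG (ClosedLengths (mEdge A)))
    (hepG : IsEp (mEdge A) cG epG)
    (dmax : ℕ)
    (hdmax : IsGreatest {c : ℕ | ∃ k : Fin N, CriticalNode (mEdge A) (mWeight A) k ∧
      IsGcdOf c (ClosedLengthsAt (CriticalEdge (mEdge A) (mWeight A)) k)} dmax)
    (epmax : ℕ) :
    BddAbove (muSet A (2 * cabDiameter (mEdge A) + epG + dmax + epmax)) ∧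
    ∀ (nA : ℕ) (nAv : Fin N → ℕ),
      IsLeast (MatTransientSet A) nA →
      (∀ j : Fin N, IsLeast (SysTransientSet A
        (fun k => if k = j then (0 : ℝ)
          else - sSup (muSet A (2 * cabDiameter (mEdge A) + epG + dmax + epmax))))
        (nAv j)) →
      (nA : ℤ) ≤ max
        (2 * (cabDiameter (mEdge A) : ℤ) + (epG : ℤ) + (dmax : ℤ) + (epmax : ℤ) - 1)
        ((Finset.univ.sup nAv : ℕ) : ℤ) := by
  -- a critical closed walk makes `cG` and `dmax` positive, so `B_ms(G) − 1 ≥ cd(G) + ep(G)`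
  obtain ⟨k, hk, hgcd⟩ := hdmax.1
  obtain ⟨q, hqG, hqk⟩ := hk.exists_closedLength
  have hcG0 : 0 < cG := Nat.pos_of_dvd_of_pos (hcG.1 q hqG) hqG.1
  have hdmax0 : 0 < dmax := Nat.pos_of_dvd_of_pos (hgcd.1 q hqk) hqk.1
  have hbdd := bddAbove_muSet hA.1 hcG.1 hepG (2 * cabDiameter (mEdge A) + epG + dmax + epmax)
  refine ⟨hbdd, fun nA nAv hnA hnAv => ?_⟩
  have hT : max (2 * cabDiameter (mEdge A) + epG + dmax + epmax - 1) (Finset.univ.sup nAv)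
      ∈ MatTransientSet A := by
    refine mem_matTransientSet hA.1 hcG.1 hcG0 hepG (by omega) (by omega) hbdd fun j => ?_
    obtain ⟨p, hp, hper⟩ := (hnAv j).1
    have hj : nAv j ≤ max (2 * cabDiameter (mEdge A) + epG + dmax + epmax - 1)
        (Finset.univ.sup nAv) := (Finset.le_sup (Finset.mem_univ j)).trans (le_max_right _ _)
    exact ⟨p, hp, fun n hn => hper n (hj.trans hn)⟩
  have := hnA.2 hT
  omega

/-- `μ(A)` is finite (the defining set is bounded above), and with
`v^j` the vector with `v^j_j = 0` and `v^j_k = −μ(A)` otherwise, the matrix transient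
satisfies `n_A ≤ max{B_ms(G), n_{A,v¹}, …, n_{A,v^N}}`, where
`B_ms(G) = 2·cd(G) + ep(G) + max_H c(H) + max_H ep(H) − 1`
(the inequality is stated in `ℤ` to avoid natural-number truncation). -/
theorem stmt_18 {N : ℕ} (A : Matrix (Fin N) (Fin N) (WithBot ℝ)) (hA : MPIrreducible A)
    (cG epG : ℕ) (hcG : IsGcdOf cG (ClosedLengths (mEdge A)))
    (hepG : IsEp (mEdge A) cG epG)
    (dmax : ℕ)
    (hdmax : IsGreatest {c : ℕ | ∃ k : Fin N, CriticalNode (mEdge A) (mWeight A) k ∧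
      IsGcdOf c (ClosedLengthsAt (CriticalEdge (mEdge A) (mWeight A)) k)} dmax)
    (epmax : ℕ)
    (hepmax : IsGreatest {m : ℕ | ∃ (k : Fin N) (c : ℕ),
      CriticalNode (mEdge A) (mWeight A) k ∧
      IsGcdOf c (ClosedLengthsAt (CriticalEdge (mEdge A) (mWeight A)) k) ∧
      IsCompEp (CriticalEdge (mEdge A) (mWeight A)) k c m} epmax) :
    BddAbove (muSet A (2 * cabDiameter (mEdge A) + epG + dmax + epmax)) ∧
    ∀ (nA : ℕ) (nAv : Fin N → ℕ),
      IsLeast (MatTransientSet A) nA →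
      (∀ j : Fin N, IsLeast (SysTransientSet A
        (fun k => if k = j then (0 : ℝ)
          else - sSup (muSet A (2 * cabDiameter (mEdge A) + epG + dmax + epmax))))
        (nAv j)) →
      (nA : ℤ) ≤ max
        (2 * (cabDiameter (mEdge A) : ℤ) + (epG : ℤ) + (dmax : ℤ) + (epmax : ℤ) - 1)
        ((Finset.univ.sup nAv : ℕ) : ℤ) :=
  stmt_18_general A hA cG epG hcG hepG dmax hdmax epmax

end Transients
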